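/- Let A' be the strongly enforceable advice extracted from a symbolic advice A for horizon H and initial state s₀ (the greatest strongly enforceable advice contained in A). Then for any node p at depth i in T(M,s₀,H,A') and any action a₀: a₀ ∈ σ_{A'}^H(p) if and only if ∀s₁ ∃a₁ ∀s₂ ∃a₂ … ∀s_{H-i}, the path p·a₀s₁a₁s₂…s_{H-i} satisfies A, where each a_k ranges over A and each s_k ranges over Supp(P(s_{k-1},a_{k-1})). -/
import Mathlib


open Finset MeasureTheory Filter Asymptotics
open scoped BigOperators Classical ENNReal

noncomputable section

namespace PaperMCTS

variable {S A : Type}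

/-- A (finite) Markov decision process: transition kernel `P`, reward `R`,
terminal reward `RT`. -/
structure MDP (S A : Type) where
  P : S → A → S → ℝ
  R : S → A → ℝ
  RT : S → ℝ

/-- `P s a` is a probability distribution on states, for every `s, a`. -/
def MDP.IsProper [Fintype S] (M : MDP S A) : Prop :=
  (∀ s a s', 0 ≤ M.P s a s') ∧ ∀ s a, ∑ s', M.P s a s' = 1

/-- A path of length `i`: `i+1` states and `i` actions. -/
abbrev Path (S A : Type) (i : ℕ) : Type := (Fin (i + 1) → S) × (Fin i → A)

def Path.first {i : ℕ} (p : Path S A i) : S := p.1 0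

def Path.lastState {i : ℕ} (p : Path S A i) : S := p.1 (Fin.last i)

/-- The prefix of length `j` of a path of length `i ≥ j`. -/
def Path.take {i : ℕ} (p : Path S A i) (j : ℕ) (h : j ≤ i) : Path S A j :=
  (fun t => p.1 ⟨t, by have := t.isLt; omega⟩,
   fun t => p.2 ⟨t, by have := t.isLt; omega⟩)

/-- Extension of a path by one action and one state: `p · a s`. -/
def Path.snoc {i : ℕ} (p : Path S A i) (a : A) (s : S) : Path S A (i + 1) :=
  (fun t => if h : (t : ℕ) ≤ i then p.1 ⟨t, by omega⟩ else s,
   fun t => if h : (t : ℕ) < i then p.2 ⟨t, h⟩ else a)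

/-- The path of length `0` at state `s`. -/
def constPath (s : S) : Path S A 0 := (fun _ => s, fun t => t.elim0)

/-- A path of the MDP: all stochastic steps have positive probability. -/
def MDP.ValidPath (M : MDP S A) {i : ℕ} (p : Path S A i) : Prop :=
  ∀ t : Fin i, 0 < M.P (p.1 t.castSucc) (p.2 t) (p.1 t.succ)

/-- A (probabilistic) strategy maps every finite path to weights on actions. -/
def Strategy (S A : Type) : Type := ∀ i : ℕ, Path S A i → A → ℝ

def IsStrategy [Fintype A] (σ : Strategy S A) : Prop :=
  (∀ i p a, 0 ≤ σ i p a) ∧ ∀ i p, ∑ a, σ i p a = 1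

/-- A strategy is deterministic if each of its distributions has singleton support. -/
def Deterministic (σ : Strategy S A) : Prop :=
  ∀ (i : ℕ) (p : Path S A i), ∃ a, ∀ b, (0 < σ i p b ↔ b = a)

/-- Probability `Pr^i_{M,σ}(p) = ∏_t σ(p|_t)(a_t) · P(s_t,a_t)(s_{t+1})`. -/
def pathProb (M : MDP S A) (σ : Strategy S A) {i : ℕ} (p : Path S A i) : ℝ :=
  ∏ t : Fin i,
    σ t (Path.take p t t.isLt.le) (p.2 t) * M.P (p.1 t.castSucc) (p.2 t) (p.1 t.succ)

/-- Compatibility with a probabilistic strategy: all played actions are in the support. -/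
def CompatStrat (σ : Strategy S A) {i : ℕ} (p : Path S A i) : Prop :=
  ∀ t : Fin i, 0 < σ t (Path.take p t t.isLt.le) (p.2 t)

/-- Total reward of a path. -/
def pathReward (M : MDP S A) {i : ℕ} (p : Path S A i) : ℝ :=
  (∑ t : Fin i, M.R (p.1 t.castSucc) (p.2 t)) + M.RT (Path.lastState p)

/-- Expected total reward of strategy `σ` with horizon `i` from `s`. -/
def ValStrat [Fintype S] [Fintype A] (M : MDP S A) (σ : Strategy S A) (i : ℕ) (s : S) : ℝ :=
  ∑ p : Path S A i, if Path.first p = s then pathProb M σ p * pathReward M p else 0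

/-- Optimal expected total reward of horizon `i` from `s`. -/
def MDP.Val [Fintype S] [Fintype A] (M : MDP S A) (i : ℕ) (s : S) : ℝ :=
  ⨆ σ : {σ : Strategy S A // IsStrategy σ}, ValStrat M σ.1 i s

/-- Optimal actions: maximizers in the value-iteration recurrence (`opt^{k+1}`). -/
def MDP.optA [Fintype S] [Fintype A] (M : MDP S A) (k : ℕ) (s : S) : Set A :=
  {a | ∀ b, M.R s b + ∑ s', M.P s b s' * M.Val k s' ≤
        M.R s a + ∑ s', M.P s a s' * M.Val k s'}

/-- States of the depth-`H` tree unfolding: paths of length at most `H`. -/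
abbrev UState (S A : Type) (H : ℕ) : Type := Σ i : Fin (H + 1), Path S A (i : ℕ)

def UState.root (H : ℕ) (s₀ : S) : UState S A H := ⟨⟨0, by omega⟩, constPath s₀⟩

/-- Depth-`H` tree unfolding of an MDP (with self loops at the leaves). -/
def MDP.unfold (M : MDP S A) (H : ℕ) : MDP (UState S A H) A where
  P := fun q a q' =>
    if h : (q.1 : ℕ) < H then
      if q' = ⟨⟨(q.1 : ℕ) + 1, by omega⟩, Path.snoc q.2 a (Path.lastState q'.2)⟩ then
        M.P (Path.lastState q.2) a (Path.lastState q'.2)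
      else 0
    else if q' = q then 1 else 0
  R := fun q a => if (q.1 : ℕ) < H then M.R (Path.lastState q.2) a else 0
  RT := fun q => M.RT (Path.lastState q.2)

/-- A symbolic advice: a predicate on finite paths. -/
def Advice (S A : Type) : Type := ∀ i : ℕ, Path S A i → Prop

/-- A nondeterministic strategy. -/
def NStrategy (S A : Type) : Type := ∀ i : ℕ, Path S A i → Set A

/-- The nondeterministic strategy `σ_A^H` induced by an advice. -/
def advStrat (M : MDP S A) (Adv : Advice S A) (H : ℕ) : NStrategy S A := fun i p =>
  if h : i < H then
    {a | ∃ q : Path S A H, Adv H q ∧ Path.take q i h.le = p ∧ q.2 ⟨i, h⟩ = a ∧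
      ∀ t : Fin H, i ≤ (t : ℕ) → 0 < M.P (q.1 t.castSucc) (q.2 t) (q.1 t.succ)}
  else Set.univ

/-- The nondeterministic environment strategy `τ_A^H` induced by an advice. -/
def envStrat (M : MDP S A) (Adv : Advice S A) (H : ℕ) :
    ∀ i : ℕ, Path S A i → A → Set S := fun i p a =>
  if h : i < H then
    {s | 0 < M.P (Path.lastState p) a s ∧
      ∃ q : Path S A H, Adv H q ∧ Path.take q i h.le = p ∧ q.2 ⟨i, h⟩ = a ∧
        q.1 ⟨i + 1, by omega⟩ = s ∧
        ∀ t : Fin H, i ≤ (t : ℕ) → 0 < M.P (q.1 t.castSucc) (q.2 t) (q.1 t.succ)}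
  else {s | 0 < M.P (Path.lastState p) a s}

/-- Compatibility with a nondeterministic strategy. -/
def CompatN (σ : NStrategy S A) {i : ℕ} (p : Path S A i) : Prop :=
  ∀ t : Fin i, p.2 t ∈ σ t (Path.take p t t.isLt.le)

/-- Compatibility with a nondeterministic environment strategy. -/
def CompatE (τ : ∀ i : ℕ, Path S A i → A → Set S) {i : ℕ} (p : Path S A i) : Prop :=
  ∀ t : Fin i, p.1 t.succ ∈ τ t (Path.take p t t.isLt.le) (p.2 t)

/-- `FPaths^H_M(s₀, A)`: length-`H` paths of `M` from `s₀` satisfying the advice. -/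
def FPathsAdv (M : MDP S A) (H : ℕ) (s₀ : S) (Adv : Advice S A) : Set (Path S A H) :=
  {p | M.ValidPath p ∧ Path.first p = s₀ ∧ Adv H p}

/-- `FPaths^H_M(s₀, σ)` for a nondeterministic strategy. -/
def FPathsN (M : MDP S A) (H : ℕ) (s₀ : S) (σ : NStrategy S A) : Set (Path S A H) :=
  {p | M.ValidPath p ∧ Path.first p = s₀ ∧ CompatN σ p}

/-- `FPaths^H_M(s₀, τ)` for a nondeterministic environment strategy. -/
def FPathsE (M : MDP S A) (H : ℕ) (s₀ : S) (τ : ∀ i : ℕ, Path S A i → A → Set S) :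
    Set (Path S A H) :=
  {p | M.ValidPath p ∧ Path.first p = s₀ ∧ CompatE τ p}

/-- `σ` witnesses that `Adv` is strongly enforceable from `s₀` with horizon `H`. -/
def Enforces (M : MDP S A) (Adv : Advice S A) (s₀ : S) (H : ℕ) (σ : NStrategy S A) : Prop :=
  FPathsN M H s₀ σ = FPathsAdv M H s₀ Adv ∧
  ∀ (i : ℕ) (p : Path S A i), i < H → M.ValidPath p → Path.first p = s₀ →
    CompatN σ p → (σ i p).Nonempty

def StronglyEnforceable (M : MDP S A) (Adv : Advice S A) (s₀ : S) (H : ℕ) : Prop :=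
  ∃ σ : NStrategy S A, Enforces M Adv s₀ H σ

/-- The pruned unfolding `T(M, s₀, H, A)`: transitions not compatible with
`σ_A^H` or `τ_A^H` are removed. -/
def prunedUnfold (M : MDP S A) (Adv : Advice S A) (H : ℕ) : MDP (UState S A H) A where
  P := fun q a q' =>
    if (q.1 : ℕ) < H then
      if a ∈ advStrat M Adv H (q.1 : ℕ) q.2 ∧
          Path.lastState q'.2 ∈ envStrat M Adv H (q.1 : ℕ) q.2 a then
        (M.unfold H).P q a q'
      else 0
    else (M.unfold H).P q a q'
  R := (M.unfold H).R
  RT := (M.unfold H).RT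

/-- The optimality assumption: every horizon-`H` optimal deterministic strategy is
contained in `σ_A^H`. -/
def OptAssumption [Fintype S] [Fintype A] (M : MDP S A) (Adv : Advice S A) (H : ℕ) : Prop :=
  ∀ (s : S) (σ : Strategy S A), IsStrategy σ → Deterministic σ →
    ValStrat M σ H s = M.Val H s →
    ∀ (i : ℕ) (p : Path S A i) (a : A), 0 < σ i p a → a ∈ advStrat M Adv H i p

/-- Actions achievable as the first action of some (deterministic) strategy attaining
the optimal expected total reward of horizon `H` at `s`. -/
def optFirst {T : Type} [Fintype T] [Fintype A] (N : MDP T A) (H : ℕ) (s : T) : Set A :=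
  {a | ∃ σ : Strategy T A, IsStrategy σ ∧ Deterministic σ ∧
    ValStrat N σ H s = N.Val H s ∧ 0 < σ 0 (constPath s) a}

/-- All total rewards of paths of length at most `H` lie in `[0,1]`. -/
def BoundedRewards (M : MDP S A) (H : ℕ) : Prop :=
  ∀ (i : ℕ) (p : Path S A i), i ≤ H → pathReward M p ∈ Set.Icc (0 : ℝ) 1

/-- `WinsAux M T k i h p` says: from the node `p` (of depth `i = H - k`), the
alternation `∃a ∀s ∃a ∀s … ∀s_last` can force reaching a length-`H` path in `T`,
states being quantified over the support of the current transition. -/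
def WinsAux (M : MDP S A) {H : ℕ} (T : Path S A H → Prop) :
    (k : ℕ) → (i : ℕ) → i + k = H → Path S A i → Prop
  | 0, i, h, p => T ((show i = H by omega) ▸ p)
  | k + 1, i, h, p =>
      ∃ a : A, ∀ s : S, 0 < M.P (Path.lastState p) a s →
        WinsAux M T k (i + 1) (by omega) (Path.snoc p a s)

/-- `Adv'` is the strongly enforceable advice extracted from `Adv` (greatest
strongly enforceable advice below `Adv`, from `s₀` with horizon `H`). -/
def ExtractedFrom (M : MDP S A) (Adv Adv' : Advice S A) (s₀ : S) (H : ℕ) : Prop :=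
  StronglyEnforceable M Adv' s₀ H ∧
  FPathsAdv M H s₀ Adv' ⊆ FPathsAdv M H s₀ Adv ∧
  ∀ Adv'' : Advice S A, StronglyEnforceable M Adv'' s₀ H →
    FPathsAdv M H s₀ Adv'' ⊆ FPathsAdv M H s₀ Adv →
    FPathsAdv M H s₀ Adv'' ⊆ FPathsAdv M H s₀ Adv'

/-- Player 1 can enforce, from node `p` of depth `i`, that every continuation
following some deterministic action-selection `f` (against arbitrary stochastic
successors in the support) reaches the target set `T` of leaves. -/
def CanEnforce (M : MDP S A) {H : ℕ} (T : Set (Path S A H)) (i : ℕ) (hi : i ≤ H)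
    (p : Path S A i) : Prop :=
  ∃ f : ∀ j : ℕ, Path S A j → A,
    ∀ q : Path S A H, Path.take q i hi = p →
      (∀ t : Fin H, i ≤ (t : ℕ) → q.2 t = f t (Path.take q t t.isLt.le)) →
      (∀ t : Fin H, i ≤ (t : ℕ) → 0 < M.P (q.1 t.castSucc) (q.2 t) (q.1 t.succ)) →
      q ∈ T

/-- The advice whose satisfied length-`H` paths are exactly the paths to `T`
remaining within winning nodes. -/
def winAdvice (M : MDP S A) {H : ℕ} (T : Set (Path S A H)) : Advice S A :=
  fun j q => ∀ h : j = H, (h ▸ q) ∈ T ∧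
    ∀ (t : ℕ) (ht : t ≤ H), CanEnforce M T t ht (Path.take (h ▸ q) t ht)

/-- The uniform strategy. -/
def uniformStrategy (S A : Type) [Fintype A] : Strategy S A :=
  fun _ _ _ => 1 / (Fintype.card A : ℝ)

end PaperMCTS

end
namespace PaperMCTS
variable {S A : Type} {M : MDP S A}

lemma take_take {n m j : ℕ} (q : Path S A n) (hm : m ≤ n) (h : j ≤ m) :
    Path.take (Path.take q m hm) j h = Path.take q j (h.trans hm) := rfl

lemma take_refl {n : ℕ} (q : Path S A n) : Path.take q n le_rfl = q := rfl

lemma first_take {n j : ℕ} (q : Path S A n) (h : j ≤ n) :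
    Path.first (Path.take q j h) = Path.first q := by
  exact congrArg q.1 (Fin.ext (by simp))

lemma take_snoc {j : ℕ} (r : Path S A j) (a : A) (s : S) (h : j ≤ j + 1) :
    Path.take (Path.snoc r a s) j h = r := by
  refine Prod.ext ?_ ?_ <;> funext t
  · show (Path.snoc r a s).1 ⟨t.1, _⟩ = r.1 t
    have ht : (t : ℕ) ≤ j := by omega
    simp [Path.snoc, ht]
  · show (Path.snoc r a s).2 ⟨t.1, _⟩ = r.2 t
    have ht : (t : ℕ) < j := t.isLt
    simp [Path.snoc, ht]

lemma snoc_take {n j : ℕ} (q : Path S A n) (h : j < n) :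
    Path.snoc (Path.take q j h.le) (q.2 ⟨j, h⟩) (q.1 ⟨j + 1, by omega⟩) =
      Path.take q (j + 1) h := by
  refine Prod.ext ?_ ?_ <;> funext t
  · show _ = q.1 ⟨t.1, _⟩
    by_cases ht : (t : ℕ) ≤ j
    · simp only [Path.snoc, dif_pos ht]
      rfl
    · simp only [Path.snoc, dif_neg ht]
      exact congrArg q.1 (Fin.ext (show j + 1 = (t : ℕ) by omega))
  · show _ = q.2 ⟨t.1, _⟩
    by_cases ht : (t : ℕ) < j
    · simp only [Path.snoc, dif_pos ht]
      rfl
    · simp only [Path.snoc, dif_neg ht]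
      exact congrArg q.2 (Fin.ext (show j = (t : ℕ) by omega))

lemma lastState_snoc {j : ℕ} (r : Path S A j) (a : A) (s : S) :
    Path.lastState (Path.snoc r a s) = s := by
  show (Path.snoc r a s).1 (Fin.last (j + 1)) = s
  simp [Path.snoc, Fin.last]

lemma lastState_take {n j : ℕ} (q : Path S A n) (h : j ≤ n) :
    Path.lastState (Path.take q j h) = q.1 ⟨j, by omega⟩ := rfl

lemma first_snoc {j : ℕ} (r : Path S A j) (a : A) (s : S) :
    Path.first (Path.snoc r a s) = Path.first r := by
  show (Path.snoc r a s).1 0 = r.1 0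
  have h0 : ((0 : Fin (j + 1 + 1)) : ℕ) ≤ j := by simp
  simp only [Path.snoc, dif_pos h0]
  exact congrArg r.1 (Fin.ext (by simp))

lemma valid_take {n j : ℕ} {q : Path S A n} (hq : M.ValidPath q) (h : j ≤ n) :
    M.ValidPath (Path.take q j h) := fun t => hq ⟨t.1, by omega⟩

lemma valid_snoc {j : ℕ} {r : Path S A j} {a : A} {s : S} (hr : M.ValidPath r)
    (hpos : 0 < M.P (Path.lastState r) a s) : M.ValidPath (Path.snoc r a s) := by
  intro t
  rcases Nat.lt_succ_iff_lt_or_eq.mp t.isLt with ht | ht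
  · have h1 : ((t.castSucc : Fin (j + 2)) : ℕ) ≤ j := by simp; omega
    have h2 : ((t.succ : Fin (j + 2)) : ℕ) ≤ j := by simp [Fin.val_succ]; omega
    show 0 < M.P ((Path.snoc r a s).1 t.castSucc) ((Path.snoc r a s).2 t) ((Path.snoc r a s).1 t.succ)
    simp only [Path.snoc, dif_pos h1, dif_pos h2, dif_pos ht]
    exact hr ⟨t.1, ht⟩
  · have h1 : ((t.castSucc : Fin (j + 2)) : ℕ) ≤ j := by simp; omega
    have h2 : ¬ ((t.succ : Fin (j + 2)) : ℕ) ≤ j := by simp [Fin.val_succ]; omega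
    have h3 : ¬ ((t : ℕ) < j) := by omega
    show 0 < M.P ((Path.snoc r a s).1 t.castSucc) ((Path.snoc r a s).2 t) ((Path.snoc r a s).1 t.succ)
    simp only [Path.snoc, dif_pos h1, dif_neg h2, dif_neg h3]
    have : r.1 ⟨(t.castSucc : Fin (j+2)).1, by omega⟩ = Path.lastState r :=
      congrArg r.1 (Fin.ext (show (t : ℕ) = j by omega))
    rw [this]
    exact hpos

lemma valid_of_parts {H j : ℕ} {q : Path S A H} (hj : j ≤ H)
    (hpre : M.ValidPath (Path.take q j hj))
    (hsuf : ∀ t : Fin H, j ≤ (t : ℕ) → 0 < M.P (q.1 t.castSucc) (q.2 t) (q.1 t.succ)) :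
    M.ValidPath q := by
  intro t
  by_cases h : (t : ℕ) < j
  · exact hpre ⟨t, h⟩
  · exact hsuf t (by omega)

lemma compatN_take {σ : NStrategy S A} {n j : ℕ} {q : Path S A n}
    (hc : CompatN σ q) (h : j ≤ n) : CompatN σ (Path.take q j h) :=
  fun t => hc ⟨t.1, by omega⟩

lemma take_snoc_of_le {j t : ℕ} (r : Path S A j) (a : A) (s : S) (ht : t ≤ j)
    (h : t ≤ j + 1) : Path.take (Path.snoc r a s) t h = Path.take r t ht := by
  refine Prod.ext ?_ ?_ <;> funext u
  · show (Path.snoc r a s).1 ⟨u.1, _⟩ = r.1 ⟨u.1, _⟩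
    have : (u : ℕ) ≤ j := by omega
    simp [Path.snoc, this]
  · show (Path.snoc r a s).2 ⟨u.1, _⟩ = r.2 ⟨u.1, _⟩
    have : (u : ℕ) < j := by omega
    simp [Path.snoc, this]

lemma compatN_snoc {σ : NStrategy S A} {j : ℕ} {r : Path S A j} {a : A} {s : S}
    (hr : CompatN σ r) (ha : a ∈ σ j r) : CompatN σ (Path.snoc r a s) := by
  intro t
  rcases Nat.lt_succ_iff_lt_or_eq.mp t.isLt with ht | ht
  · have e1 : (Path.snoc r a s).2 t = r.2 ⟨t.1, ht⟩ := by simp [Path.snoc, ht]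
    have e2 : Path.take (Path.snoc r a s) t t.isLt.le = Path.take r t ht.le :=
      take_snoc_of_le r a s ht.le _
    rw [e1, e2]
    exact hr ⟨t.1, ht⟩
  · have e1 : (Path.snoc r a s).2 t = a := by simp [Path.snoc, ht]
    rcases t with ⟨tv, htv⟩
    simp only at ht
    subst ht
    have e2 : Path.take (Path.snoc r a s) tv (by omega) = r := take_snoc r a s (by omega)
    rw [e1]
    show a ∈ σ tv (Path.take (Path.snoc r a s) tv _)
    rw [e2]
    exact ha

lemma exists_pos_succ [Fintype S] (hM : M.IsProper) (s : S) (a : A) :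
    ∃ s', 0 < M.P s a s' := by
  by_contra h
  push_neg at h
  have : ∑ s', M.P s a s' = 0 :=
    Finset.sum_eq_zero fun s' _ => le_antisymm (h s') (hM.1 s a s')
  rw [hM.2 s a] at this
  norm_num at this

end PaperMCTS
namespace PaperMCTS
variable {S A : Type} {M : MDP S A}

lemma winsAux_congr {H : ℕ} {T : Path S A H → Prop} {k k' j : ℕ} (e : k = k')
    (h : j + k = H) (h' : j + k' = H) {r : Path S A j}
    (hw : WinsAux M T k j h r) : WinsAux M T k' j h' r := by
  subst e; exact hw

lemma winsAux_compat [Fintype S] (hM : M.IsProper) {Adv Adv' : Advice S A} {s₀ : S}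
    {H : ℕ} {σ : NStrategy S A} (hσ : Enforces M Adv' s₀ H σ)
    (hsub : FPathsAdv M H s₀ Adv' ⊆ FPathsAdv M H s₀ Adv) :
    ∀ (k j : ℕ) (h : j + k = H) (r : Path S A j), M.ValidPath r → Path.first r = s₀ →
      CompatN σ r → WinsAux M (Adv H) k j h r := by
  intro k
  induction k with
  | zero =>
    intro j h r hv h0 hc
    obtain rfl : j = H := by omega
    have hmem : r ∈ FPathsAdv M j s₀ Adv' := by rw [← hσ.1]; exact ⟨hv, h0, hc⟩
    exact (hsub hmem).2.2
  | succ k ih =>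
    intro j h r hv h0 hc
    obtain ⟨a, ha⟩ := hσ.2 j r (by omega) hv h0 hc
    exact ⟨a, fun s hs => ih (j + 1) (by omega) _ (valid_snoc hv hs)
      ((first_snoc r a s).trans h0) (compatN_snoc hc ha)⟩

lemma ext_compat [Fintype S] (hM : M.IsProper) {Adv' : Advice S A} {s₀ : S}
    {H : ℕ} {σ : NStrategy S A} (hσ : Enforces M Adv' s₀ H σ) :
    ∀ (k j : ℕ) (h : j + k = H) (r : Path S A j), M.ValidPath r → Path.first r = s₀ →
      CompatN σ r →
      ∃ q : Path S A H, Path.take q j (by omega) = r ∧ q ∈ FPathsN M H s₀ σ := by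
  intro k
  induction k with
  | zero =>
    intro j h r hv h0 hc
    obtain rfl : j = H := by omega
    exact ⟨r, take_refl r, hv, h0, hc⟩
  | succ k ih =>
    intro j h r hv h0 hc
    obtain ⟨a, ha⟩ := hσ.2 j r (by omega) hv h0 hc
    obtain ⟨s, hs⟩ := exists_pos_succ hM (Path.lastState r) a
    obtain ⟨q, hq1, hq2⟩ := ih (j + 1) (by omega) (Path.snoc r a s) (valid_snoc hv hs)
      ((first_snoc r a s).trans h0) (compatN_snoc hc ha)
    refine ⟨q, ?_, hq2⟩
    calc Path.take q j (by omega)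
        = Path.take (Path.take q (j + 1) (by omega)) j (by omega) := rfl
      _ = Path.take (Path.snoc r a s) j (by omega) := by rw [hq1]
      _ = r := take_snoc r a s (by omega)

lemma mem_sigma_of_advStrat {Adv' : Advice S A} {s₀ : S} {H : ℕ} {σ : NStrategy S A}
    (hσ : Enforces M Adv' s₀ H σ) {j : ℕ} (hj : j < H) {r : Path S A j}
    (hv : M.ValidPath r) (h0 : Path.first r = s₀) {a : A}
    (ha : a ∈ advStrat M Adv' H j r) : a ∈ σ j r ∧ CompatN σ r := by
  simp only [advStrat, dif_pos hj, Set.mem_setOf_eq] at ha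
  obtain ⟨q, hq1, hq2, hq3, hq4⟩ := ha
  subst hq2
  have hqv : M.ValidPath q := valid_of_parts hj.le hv hq4
  have hq0 : Path.first q = s₀ := (first_take q hj.le).symm.trans h0
  have hmem : q ∈ FPathsAdv M H s₀ Adv' := ⟨hqv, hq0, hq1⟩
  rw [← hσ.1] at hmem
  have hcq : CompatN σ q := hmem.2.2
  subst hq3
  exact ⟨hcq ⟨j, hj⟩, compatN_take hcq hj.le⟩

lemma mem_advStrat_of_sigma [Fintype S] (hM : M.IsProper) {Adv' : Advice S A} {s₀ : S}
    {H : ℕ} {σ : NStrategy S A} (hσ : Enforces M Adv' s₀ H σ) {j : ℕ} (hj : j < H)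
    {r : Path S A j} (hv : M.ValidPath r) (h0 : Path.first r = s₀)
    (hc : CompatN σ r) {a : A} (ha : a ∈ σ j r) : a ∈ advStrat M Adv' H j r := by
  obtain ⟨s, hs⟩ := exists_pos_succ hM (Path.lastState r) a
  obtain ⟨q, hq1, hq2⟩ := ext_compat hM hσ (H - (j + 1)) (j + 1) (by omega)
    (Path.snoc r a s) (valid_snoc hv hs) ((first_snoc r a s).trans h0) (compatN_snoc hc ha)
  rw [hσ.1] at hq2
  simp only [advStrat, dif_pos hj, Set.mem_setOf_eq]
  refine ⟨q, hq2.2.2, ?_, ?_, fun t _ => hq2.1 t⟩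
  · calc Path.take q j hj.le
        = Path.take (Path.take q (j + 1) (by omega)) j (by omega) := rfl
      _ = Path.take (Path.snoc r a s) j (by omega) := by rw [hq1]
      _ = r := take_snoc r a s (by omega)
  · have e1 : (Path.take q (j + 1) (by omega : j + 1 ≤ H)).2 ⟨j, by omega⟩
        = (Path.snoc r a s).2 ⟨j, by omega⟩ := by rw [hq1]
    have e2 : (Path.snoc r a s).2 ⟨j, by omega⟩ = a := by simp [Path.snoc]
    exact e1.trans e2

/-- The strategy choosing uniformly winning actions (w.r.t. reaching `Adv`). -/
def winStrat (M : MDP S A) (Adv : Advice S A) (H : ℕ) : NStrategy S A := fun j r =>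
  if h : j + 1 ≤ H then
    {a | ∀ s, 0 < M.P (Path.lastState r) a s →
      WinsAux M (Adv H) (H - (j + 1)) (j + 1) (by omega) (Path.snoc r a s)}
  else Set.univ

/-- The advice of length-`H` paths compatible with `winStrat`. -/
def winAdv (M : MDP S A) (Adv : Advice S A) (H : ℕ) : Advice S A :=
  fun j q => ∀ h : j = H, CompatN (winStrat M Adv H) (h ▸ q)

lemma mem_winStrat {Adv : Advice S A} {H j : ℕ} (hj : j + 1 ≤ H) {r : Path S A j} {a : A} :
    a ∈ winStrat M Adv H j r ↔ ∀ s, 0 < M.P (Path.lastState r) a s →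
      WinsAux M (Adv H) (H - (j + 1)) (j + 1) (by omega) (Path.snoc r a s) := by
  simp only [winStrat, dif_pos hj, Set.mem_setOf_eq]

lemma winsAux_of_compat_winStrat {Adv : Advice S A} {s₀ : S} {H : ℕ}
    (hwin0 : ∀ r : Path S A 0, Path.first r = s₀ → WinsAux M (Adv H) H 0 (by omega) r)
    {j : ℕ} (hj : j ≤ H) {r : Path S A j} (hv : M.ValidPath r) (h0 : Path.first r = s₀)
    (hc : CompatN (winStrat M Adv H) r) :
    WinsAux M (Adv H) (H - j) j (by omega) r := by
  cases j with
  | zero => exact hwin0 r h0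
  | succ j =>
    have hc' := (mem_winStrat (show j + 1 ≤ H by omega)).mp (hc ⟨j, by omega⟩)
    have hpos := hv ⟨j, by omega⟩
    have hw := hc' (r.1 ⟨j + 1, by omega⟩) hpos
    have e : Path.snoc (Path.take r j (by omega)) (r.2 ⟨j, by omega⟩) (r.1 ⟨j + 1, by omega⟩) = r :=
      (snoc_take r (Nat.lt_succ_self j)).trans (take_refl r)
    rw [e] at hw
    exact winsAux_congr (by omega) _ (by omega) hw

lemma enforces_winAdv {Adv : Advice S A} {s₀ : S} {H : ℕ}
    (hwin0 : ∀ r : Path S A 0, Path.first r = s₀ → WinsAux M (Adv H) H 0 (by omega) r) :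
    Enforces M (winAdv M Adv H) s₀ H (winStrat M Adv H) := by
  constructor
  · ext q
    exact ⟨fun hq => ⟨hq.1, hq.2.1, fun h => hq.2.2⟩, fun hq => ⟨hq.1, hq.2.1, hq.2.2 rfl⟩⟩
  · intro j r hjH hv h0 hc
    have hw := winsAux_of_compat_winStrat hwin0 hjH.le hv h0 hc
    have hw' := winsAux_congr (show H - j = (H - (j + 1)) + 1 by omega) _ (by omega) hw
    obtain ⟨a, ha⟩ := hw'
    exact ⟨a, (mem_winStrat hjH).mpr ha⟩

lemma winAdv_sub {Adv : Advice S A} {s₀ : S} {H : ℕ} (hH : 0 < H) :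
    FPathsAdv M H s₀ (winAdv M Adv H) ⊆ FPathsAdv M H s₀ Adv := by
  obtain ⟨n, rfl⟩ : ∃ n, H = n + 1 := ⟨H - 1, by omega⟩
  intro q hq
  refine ⟨hq.1, hq.2.1, ?_⟩
  have hc : CompatN (winStrat M Adv (n + 1)) q := hq.2.2 rfl
  have hc' := (mem_winStrat (le_refl (n + 1))).mp (hc ⟨n, by omega⟩)
  have hpos := hq.1 ⟨n, by omega⟩
  have hw := hc' (q.1 ⟨n + 1, by omega⟩) hpos
  have e : Path.snoc (Path.take q n (by omega)) (q.2 ⟨n, by omega⟩) (q.1 ⟨n + 1, by omega⟩) = q :=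
    (snoc_take q (Nat.lt_succ_self n)).trans (take_refl q)
  rw [e] at hw
  exact winsAux_congr (show n + 1 - (n + 1) = 0 by omega) _ (by omega) hw

lemma build_path [Fintype S] (hM : M.IsProper) {Adv : Advice S A} {s₀ : S} {H : ℕ} :
    ∀ (k j : ℕ) (h : j + k = H) (r : Path S A j), M.ValidPath r → Path.first r = s₀ →
      CompatN (winStrat M Adv H) r → WinsAux M (Adv H) k j h r →
      ∃ q : Path S A H, Path.take q j (by omega) = r ∧
        q ∈ FPathsN M H s₀ (winStrat M Adv H) := by
  intro k
  induction k with
  | zero =>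
    intro j h r hv h0 hc _
    obtain rfl : j = H := by omega
    exact ⟨r, take_refl r, hv, h0, hc⟩
  | succ k ih =>
    intro j h r hv h0 hc hw
    obtain ⟨a, ha⟩ := hw
    have haW : a ∈ winStrat M Adv H j r := by
      rw [mem_winStrat (by omega)]
      intro s hs
      exact winsAux_congr (by omega) _ (by omega) (ha s hs)
    obtain ⟨s, hs⟩ := exists_pos_succ hM (Path.lastState r) a
    obtain ⟨q, hq1, hq2⟩ := ih (j + 1) (by omega) (Path.snoc r a s) (valid_snoc hv hs)
      ((first_snoc r a s).trans h0) (compatN_snoc hc haW) (ha s hs)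
    refine ⟨q, ?_, hq2⟩
    calc Path.take q j (by omega)
        = Path.take (Path.take q (j + 1) (by omega)) j (by omega) := rfl
      _ = Path.take (Path.snoc r a s) j (by omega) := by rw [hq1]
      _ = r := take_snoc r a s (by omega)

end PaperMCTS
namespace PaperMCTS
/-- QBF characterization of the extracted strongly enforceable advice:
`a₀ ∈ σ_{A'}^H(p)` iff `∀s₁ ∃a₁ ∀s₂ … ∀s_{H-i}`, the extension satisfies `A`. -/
theorem extracted_qbf [Fintype S] (M : MDP S A) (hM : M.IsProper)
    (Adv Adv' : Advice S A) (s₀ : S) (H : ℕ)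
    (hext : ExtractedFrom M Adv Adv' s₀ H)
    (i : ℕ) (hi : i < H) (p : Path S A i) (hp : M.ValidPath p)
    (hp0 : Path.first p = s₀) (hcomp : CompatN (advStrat M Adv' H) p) (a₀ : A) :
    a₀ ∈ advStrat M Adv' H i p ↔
      ∀ s₁ : S, 0 < M.P (Path.lastState p) a₀ s₁ →
        WinsAux M (Adv H) (H - (i + 1)) (i + 1) (by omega) (Path.snoc p a₀ s₁) := by
  obtain ⟨⟨σ, hσ⟩, hsub, hmax⟩ := hext
  have hcσ : CompatN σ p := fun t =>
    (mem_sigma_of_advStrat hσ (lt_trans t.isLt hi) (valid_take hp t.isLt.le)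
      ((first_take p t.isLt.le).trans hp0) (hcomp t)).1
  constructor
  · intro ha s₁ hs₁
    have ha' : a₀ ∈ σ i p := (mem_sigma_of_advStrat hσ hi hp hp0 ha).1
    exact winsAux_compat hM hσ hsub (H - (i + 1)) (i + 1) (by omega) (Path.snoc p a₀ s₁)
      (valid_snoc hp hs₁) ((first_snoc p a₀ s₁).trans hp0) (compatN_snoc hcσ ha')
  · intro hQ
    have hwin0 : ∀ r : Path S A 0, Path.first r = s₀ → WinsAux M (Adv H) H 0 (by omega) r :=
      fun r h0 => winsAux_compat hM hσ hsub H 0 (by omega) r (fun t => t.elim0) h0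
        (fun t => t.elim0)
    have hWenf := enforces_winAdv (M := M) hwin0
    have hWsub := winAdv_sub (M := M) (Adv := Adv) (s₀ := s₀) (show 0 < H by omega)
    have hWA' : FPathsAdv M H s₀ (winAdv M Adv H) ⊆ FPathsAdv M H s₀ Adv' :=
      hmax _ ⟨_, hWenf⟩ hWsub
    have hcW : CompatN (winStrat M Adv H) p := by
      intro t
      rw [mem_winStrat (show (t : ℕ) + 1 ≤ H by omega)]
      intro s hs
      exact winsAux_compat hM hσ hsub (H - ((t : ℕ) + 1)) ((t : ℕ) + 1) (by omega) _
        (valid_snoc (valid_take hp t.isLt.le) hs)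
        ((first_snoc _ _ _).trans ((first_take p t.isLt.le).trans hp0))
        (compatN_snoc (compatN_take hcσ t.isLt.le) (hcσ t))
    obtain ⟨s₁, hs₁⟩ := exists_pos_succ hM (Path.lastState p) a₀
    have haW : a₀ ∈ winStrat M Adv H i p := by
      rw [mem_winStrat (show i + 1 ≤ H by omega)]
      exact hQ
    obtain ⟨q, hq1, hq2⟩ := build_path hM (H - (i + 1)) (i + 1) (by omega)
      (Path.snoc p a₀ s₁) (valid_snoc hp hs₁) ((first_snoc p a₀ s₁).trans hp0)
      (compatN_snoc hcW haW) (hQ s₁ hs₁)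
    rw [hWenf.1] at hq2
    have hq' : q ∈ FPathsAdv M H s₀ Adv' := hWA' hq2
    simp only [advStrat, dif_pos hi, Set.mem_setOf_eq]
    refine ⟨q, hq'.2.2, ?_, ?_, fun t _ => hq'.1 t⟩
    · calc Path.take q i hi.le
          = Path.take (Path.take q (i + 1) (by omega)) i (by omega) := rfl
        _ = Path.take (Path.snoc p a₀ s₁) i (by omega) := by rw [hq1]
        _ = p := take_snoc p a₀ s₁ (by omega)
    · have e1 : (Path.take q (i + 1) (by omega : i + 1 ≤ H)).2 ⟨i, by omega⟩
          = (Path.snoc p a₀ s₁).2 ⟨i, by omega⟩ := by rw [hq1]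
      have e2 : (Path.snoc p a₀ s₁).2 ⟨i, by omega⟩ = a₀ := by simp [Path.snoc]
      exact e1.trans e2
end PaperMCTS
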